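/- Let N ≥ 2 be an integer, 0 < δ < R, λ ≥ 0, and let f : [δ,R] × ℝ → ℝ be continuous. Define h : ℝ → ℝ by h(y) = (1−y²)^{3/2} for |y| ≤ 1 and h(y) = 0 for |y| > 1. Then a function u ∈ C¹([δ,R]) with r ↦ r^{N−1}u'(r) continuously differentiable satisfies −(r^{N−1}u')' = λ r^{N−1} f(r,u) h(u') − (N−1) r^{N−2} (u')³ on (δ,R) with u'(δ) = 0 = u(R) if and only if u satisfies |u'(r)| < 1 for all r ∈ [δ,R], r ↦ r^{N−1}φ₁(u'(r)) is continuously differentiable, (r^{N−1}φ₁(u'))' + λ r^{N−1} f(r,u) = 0 on (δ,R), and u'(δ) = 0 = u(R). In particular, every solution u of the first problem satisfies sup_{r∈[δ,R]} |u'(r)| < 1. -/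

import Mathlib

open Set Filter Topology

/-- `φ₁(s) = s / √(1 - s²)`. -/
noncomputable def phi1 (s : ℝ) : ℝ := s / Real.sqrt (1 - s ^ 2)

/-- Condition (A1): `f : [0,R] × (-α,α) → ℝ` is continuous, `R < α ≤ ∞`, and
`f(r,s) s > 0` for `r ∈ [0,R]` and `0 < |s| < α`. -/
def CondA1 (R : ℝ) (α : EReal) (f : ℝ → ℝ → ℝ) : Prop :=
  (R : EReal) < α ∧
  ContinuousOn (fun p : ℝ × ℝ => f p.1 p.2)
    {p : ℝ × ℝ | p.1 ∈ Icc 0 R ∧ ((|p.2| : ℝ) : EReal) < α} ∧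
  ∀ r ∈ Icc 0 R, ∀ s : ℝ, ((|s| : ℝ) : EReal) < α → s ≠ 0 → 0 < f r s * s

/-- Condition (A2): `f(r,s)/s → m(r)` as `s → 0`, uniformly in `r ∈ [δ,R]`, with
`m` continuous, nonnegative, and not identically zero on any nondegenerate
subinterval of `[δ,R]`. -/
def CondA2 (δ R : ℝ) (f : ℝ → ℝ → ℝ) (m : ℝ → ℝ) : Prop :=
  ContinuousOn m (Icc δ R) ∧
  (∀ r ∈ Icc δ R, 0 ≤ m r) ∧
  (∀ a b : ℝ, δ ≤ a → a < b → b ≤ R → ∃ r ∈ Icc a b, m r ≠ 0) ∧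
  ∀ ε : ℝ, 0 < ε → ∃ η : ℝ, 0 < η ∧
    ∀ r ∈ Icc δ R, ∀ s : ℝ, s ≠ 0 → |s| < η → |f r s / s - m r| < ε

/-- Condition (A3): `f(r,0) = 0` and `f(r,s)/φ₁(s) → ∞` as `s → 0`, uniformly in
`r ∈ [δ,R]`. -/
def CondA3 (δ R : ℝ) (f : ℝ → ℝ → ℝ) : Prop :=
  (∀ r ∈ Icc δ R, f r 0 = 0) ∧
  ∀ M : ℝ, ∃ η : ℝ, 0 < η ∧
    ∀ r ∈ Icc δ R, ∀ s : ℝ, s ≠ 0 → |s| < η → M < f r s / phi1 s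

/-- Condition (A4): `F(r,s) = ∫₀^s f(r,x) dx` is differentiable in `r ∈ [δ,R]` and
`|∂F/∂r(r,s)| ≤ ω(r) F(r,s)` for a continuous nonnegative `ω`. -/
def CondA4 (δ R : ℝ) (α : EReal) (f : ℝ → ℝ → ℝ) : Prop :=
  ∃ Fr : ℝ → ℝ → ℝ, ∃ ω : ℝ → ℝ,
    ContinuousOn ω (Icc δ R) ∧ (∀ r ∈ Icc δ R, 0 ≤ ω r) ∧
    ∀ s : ℝ, ((|s| : ℝ) : EReal) < α →
      (∀ r ∈ Icc δ R,
        HasDerivWithinAt (fun t => ∫ x in (0:ℝ)..s, f t x) (Fr r s) (Icc δ R) r) ∧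
      (∀ r ∈ Icc δ R, |Fr r s| ≤ ω r * ∫ x in (0:ℝ)..s, f r x)

/-- `u` (with derivative `u'`) is a solution of problem `(P)_{δ,λ}`:
`u ∈ C¹([δ,R])`, `|u'| < 1`, `r ↦ r^{N-1} φ₁(u'(r))` is continuously
differentiable, `(r^{N-1} φ₁(u'))' + λ r^{N-1} f(r,u) = 0` on `(δ,R)`, and
`u'(δ) = 0 = u(R)`. -/
def IsSolP (N : ℕ) (δ R lam : ℝ) (f : ℝ → ℝ → ℝ) (u u' : ℝ → ℝ) : Prop :=
  (∀ r ∈ Icc δ R, HasDerivWithinAt u (u' r) (Icc δ R) r) ∧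
  ContinuousOn u' (Icc δ R) ∧
  (∀ r ∈ Icc δ R, |u' r| < 1) ∧
  (∃ w' : ℝ → ℝ, ContinuousOn w' (Icc δ R) ∧
    (∀ r ∈ Icc δ R,
      HasDerivWithinAt (fun t => t ^ (N - 1) * phi1 (u' t)) (w' r) (Icc δ R) r) ∧
    ∀ r ∈ Ioo δ R, w' r + lam * r ^ (N - 1) * f r (u r) = 0) ∧
  u' δ = 0 ∧ u R = 0

/-- `u ∈ S^ν_{k,δ}`: `u'(δ) = u(R) = 0`, `u` has exactly `k-1` zeros in `(δ,R)`,
all simple (`u' ≠ 0` there), and `ν u > 0` on some interval `(δ, δ+σ)`. -/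
def InS (δ R : ℝ) (k : ℕ) (ν : ℝ) (u u' : ℝ → ℝ) : Prop :=
  u' δ = 0 ∧ u R = 0 ∧
  (∃ Z : Finset ℝ, Z.card = k - 1 ∧
    (∀ r : ℝ, r ∈ Z ↔ r ∈ Ioo δ R ∧ u r = 0) ∧
    ∀ r ∈ Z, u' r ≠ 0) ∧
  ∃ σ : ℝ, 0 < σ ∧ ∀ r ∈ Ioo δ (δ + σ), 0 < ν * u r

/-- `w` (with derivative `w'`) is a solution of the linear problem
`-(r^{N-1} w')' = λ r^{N-1} m(r) w` on `(δ,R)` with `w'(δ) = w(R) = 0`. -/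
def IsLinSol (N : ℕ) (δ R lam : ℝ) (m : ℝ → ℝ) (w w' : ℝ → ℝ) : Prop :=
  (∀ r ∈ Icc δ R, HasDerivWithinAt w (w' r) (Icc δ R) r) ∧
  ContinuousOn w' (Icc δ R) ∧
  (∃ g : ℝ → ℝ, ContinuousOn g (Icc δ R) ∧
    (∀ r ∈ Icc δ R,
      HasDerivWithinAt (fun t => t ^ (N - 1) * w' t) (g r) (Icc δ R) r) ∧
    ∀ r ∈ Ioo δ R, -g r = lam * r ^ (N - 1) * m r * w r) ∧
  w' δ = 0 ∧ w R = 0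

/-- `lam` is the `k`-th eigenvalue of the linear problem: it is positive and the
problem admits a nontrivial solution having exactly `k-1` simple zeros in
`(δ,R)`. -/
def IsKthEigen (N : ℕ) (δ R : ℝ) (m : ℝ → ℝ) (k : ℕ) (lam : ℝ) : Prop :=
  0 < lam ∧
  ∃ w w' : ℝ → ℝ, IsLinSol N δ R lam m w w' ∧ (∃ r ∈ Icc δ R, w r ≠ 0) ∧
    ∃ Z : Finset ℝ, Z.card = k - 1 ∧
      (∀ r : ℝ, r ∈ Z ↔ r ∈ Ioo δ R ∧ w r = 0) ∧
      ∀ r ∈ Z, w' r ≠ 0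

/-- The function `h(y) = (1-y²)^{3/2}` for `|y| ≤ 1`, `h(y) = 0` otherwise. -/
noncomputable def hcap (y : ℝ) : ℝ := if |y| ≤ 1 then (1 - y ^ 2) ^ ((3 : ℝ) / 2) else 0

/-- `φ₁⁻¹(y) = y / √(1 + y²)`, the inverse of `φ₁`. -/
noncomputable def phi1inv (y : ℝ) : ℝ := y / Real.sqrt (1 + y ^ 2)

/-- `Σ_δ`: the closure, in `ℝ × C¹([δ,R])` (realized as `ℝ × (C([δ,R]) × C([δ,R]))`
via `u ↦ (u, u')`), of the set of pairs `(λ, u)` with `λ ≥ 0` and `u` a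
nontrivial solution of `(P)_{δ,λ}`. -/
noncomputable def SigmaSet (N : ℕ) (δ R : ℝ) (f : ℝ → ℝ → ℝ) :
    Set (ℝ × (ContinuousMap (Icc δ R) ℝ × ContinuousMap (Icc δ R) ℝ)) :=
  closure {p | 0 ≤ p.1 ∧ ∃ u u' : ℝ → ℝ,
    IsSolP N δ R p.1 f u u' ∧
    (∀ x : Icc δ R, p.2.1 x = u x ∧ p.2.2 x = u' x) ∧
    ∃ r ∈ Icc δ R, u r ≠ 0}

/-!
Write `ρ(r) = r^(N-1)`. Since `φ₁' = 1 / h` on `(-1, 1)`, the chain rule turns `(ρ u')' = g` into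
`(ρ φ₁(u'))' = (g - ρ' u'³) / h(u')` at every point where `|u'| < 1`, and `φ₁⁻¹` turns it back;
so the two equations are equivalent as soon as `|u'| < 1` on `[δ, R]`.

That bound comes from a continuity argument. While `|u'| < 1` on `[δ, t]`, the flux `ρ φ₁(u')`
vanishes at `δ` and has derivative `-λ ρ f(r, u)`, so by the mean value theorem it is bounded
independently of `t`; hence `|u'|` stays below a fixed `c < 1` and never reaches `1`.
-/

lemma one_sub_sq_pos_of_abs_lt_one {s : ℝ} (hs : |s| < 1) : 0 < 1 - s ^ 2 :=
  sub_pos.2 ((sq_lt_one_iff_abs_lt_one s).2 hs)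

lemma hcap_of_abs_le {s : ℝ} (hs : |s| ≤ 1) : hcap s = (1 - s ^ 2) * √(1 - s ^ 2) := by
  have hp : 0 ≤ 1 - s ^ 2 := by nlinarith [sq_abs s, abs_nonneg s]
  rw [hcap, if_pos hs, show (3 : ℝ) / 2 = 1 + 1 / 2 by norm_num, Real.rpow_add' hp (by norm_num),
    Real.rpow_one, Real.sqrt_eq_rpow]

lemma hcap_pos {s : ℝ} (hs : |s| < 1) : 0 < hcap s := by
  have := one_sub_sq_pos_of_abs_lt_one hs
  rw [hcap_of_abs_le hs.le]; positivity

lemma continuous_hcap : Continuous hcap :=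
  Continuous.if_le ((Real.continuous_rpow_const (by norm_num)).comp (by fun_prop))
    continuous_const continuous_abs continuous_const fun y hy => by
      simp [sq_abs y ▸ congrArg (· ^ 2) hy]

lemma phi1_mul_hcap {s : ℝ} (hs : |s| < 1) : phi1 s * hcap s = s * (1 - s ^ 2) := by
  have := Real.sqrt_pos.2 (one_sub_sq_pos_of_abs_lt_one hs)
  rw [phi1, hcap_of_abs_le hs.le]; field_simp

lemma hasDerivAt_phi1 {s : ℝ} (hs : |s| < 1) : HasDerivAt phi1 (hcap s)⁻¹ s := by
  have hp := one_sub_sq_pos_of_abs_lt_one hs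
  have hsq := Real.sqrt_pos.2 hp
  have hroot : HasDerivAt (fun x => √(1 - x ^ 2)) (-(2 * s) / (2 * √(1 - s ^ 2))) s := by
    simpa using ((hasDerivAt_pow 2 s).const_sub 1).sqrt hp.ne'
  refine ((hasDerivAt_id s).div hroot hsq.ne').congr_deriv ?_
  rw [hcap_of_abs_le hs.le, id]
  field_simp
  rw [Real.sq_sqrt hp.le]
  ring

lemma abs_phi1inv_lt_one (y : ℝ) : |phi1inv y| < 1 := by
  have hq : 0 < √(1 + y ^ 2) := Real.sqrt_pos.2 (by positivity)
  rw [phi1inv, abs_div, abs_of_pos hq, div_lt_one hq, ← Real.sqrt_sq_eq_abs]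
  exact Real.sqrt_lt_sqrt (sq_nonneg y) (by linarith)

lemma phi1_phi1inv (y : ℝ) : phi1 (phi1inv y) = y := by
  have hq : 0 < 1 + y ^ 2 := by positivity
  have hsq := Real.sqrt_pos.2 hq
  have h1 : 1 - phi1inv y ^ 2 = (√(1 + y ^ 2))⁻¹ ^ 2 := by
    rw [phi1inv, div_pow, inv_pow, Real.sq_sqrt hq.le]; field_simp; ring
  rw [phi1, h1, Real.sqrt_sq (by positivity), phi1inv]
  field_simp

lemma phi1inv_phi1 {s : ℝ} (hs : |s| < 1) : phi1inv (phi1 s) = s := by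
  have hp := one_sub_sq_pos_of_abs_lt_one hs
  have hsq := Real.sqrt_pos.2 hp
  have h1 : 1 + phi1 s ^ 2 = (√(1 - s ^ 2))⁻¹ ^ 2 := by
    rw [phi1, div_pow, inv_pow, Real.sq_sqrt hp.le]; field_simp; ring
  rw [phi1inv, h1, Real.sqrt_sq (by positivity), phi1]
  field_simp

lemma continuous_phi1inv : Continuous phi1inv :=
  continuous_id.div (by fun_prop) fun y => (Real.sqrt_pos.2 (by positivity)).ne'

lemma hasDerivAt_phi1inv (y : ℝ) : HasDerivAt phi1inv (hcap (phi1inv y)) y := by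
  have hlt := abs_phi1inv_lt_one y
  simpa using (hasDerivAt_phi1 hlt).of_local_left_inverse continuous_phi1inv.continuousAt
    (inv_ne_zero (hcap_pos hlt).ne') (Eventually.of_forall phi1_phi1inv)

lemma strictMono_phi1inv : StrictMono phi1inv :=
  strictMono_of_hasDerivAt_pos hasDerivAt_phi1inv fun y => hcap_pos (abs_phi1inv_lt_one y)

lemma phi1_abs (s : ℝ) : phi1 |s| = |phi1 s| := by
  rw [phi1, phi1, sq_abs, abs_div, abs_of_nonneg (Real.sqrt_nonneg _)]

lemma abs_le_phi1inv_of_abs_phi1_le {s L : ℝ} (hs : |s| < 1) (h : |phi1 s| ≤ L) :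
    |s| ≤ phi1inv L := by
  calc |s| = phi1inv (phi1 |s|) := (phi1inv_phi1 (by rwa [abs_abs])).symm
    _ ≤ phi1inv L := strictMono_phi1inv.monotone (phi1_abs s ▸ h)

section Weighted

variable {S : Set ℝ} {ρ v : ℝ → ℝ} {ρ' r : ℝ}

lemma HasDerivWithinAt.of_weighted {y : ℝ → ℝ} {w : ℝ}
    (h : HasDerivWithinAt (fun t => ρ t * y t) w S r) (hρ : HasDerivWithinAt ρ ρ' S r)
    (hρS : ∀ t ∈ S, ρ t ≠ 0) (hr : r ∈ S) :
    HasDerivWithinAt y ((w - ρ' * y r) / ρ r) S r := by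
  have hρr := hρS r hr
  refine ((h.div hρ hρr).congr (fun t ht => ?_) ?_).congr_deriv ?_
  · exact (mul_div_cancel_left₀ _ (hρS t ht)).symm
  · exact (mul_div_cancel_left₀ _ hρr).symm
  · field_simp

lemma HasDerivWithinAt.weighted_phi1 {g : ℝ}
    (h : HasDerivWithinAt (fun t => ρ t * v t) g S r) (hρ : HasDerivWithinAt ρ ρ' S r)
    (hρS : ∀ t ∈ S, ρ t ≠ 0) (hr : r ∈ S) (hv : |v r| < 1) :
    HasDerivWithinAt (fun t => ρ t * phi1 (v t)) ((g - ρ' * v r ^ 3) / hcap (v r)) S r := by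
  have hρr := hρS r hr
  have hcap0 := (hcap_pos hv).ne'
  refine (hρ.mul ((hasDerivAt_phi1 hv).comp_hasDerivWithinAt r
    (h.of_weighted hρ hρS hr))).congr_deriv ?_
  have := phi1_mul_hcap hv
  rw [Function.comp_apply, eq_div_iff hcap0]
  field_simp
  linear_combination ρ' * this

lemma HasDerivWithinAt.weighted_of_phi1 {G : ℝ}
    (h : HasDerivWithinAt (fun t => ρ t * phi1 (v t)) G S r) (hρ : HasDerivWithinAt ρ ρ' S r)
    (hρS : ∀ t ∈ S, ρ t ≠ 0) (hr : r ∈ S) (hvS : ∀ t ∈ S, |v t| < 1) :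
    HasDerivWithinAt (fun t => ρ t * v t) (hcap (v r) * G + ρ' * v r ^ 3) S r := by
  have hρr := hρS r hr
  have hv := ((hasDerivAt_phi1inv _).comp_hasDerivWithinAt r (h.of_weighted hρ hρS hr)).congr
    (fun t ht => (phi1inv_phi1 (hvS t ht)).symm) (phi1inv_phi1 (hvS r hr)).symm
  rw [phi1inv_phi1 (hvS r hr)] at hv
  refine (hρ.mul hv).congr_deriv ?_
  have := phi1_mul_hcap (hvS r hr)
  rw [mul_left_comm, mul_div_cancel₀ _ hρr]
  linear_combination -ρ' * this

end Weighted

lemma ContinuousOn.forall_lt_of_bootstrap {F : ℝ → ℝ} {a b c M : ℝ}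
    (hF : ContinuousOn F (Icc a b)) (ha : F a < M) (hc : c < M)
    (hboot : ∀ t ∈ Icc a b, (∀ s ∈ Icc a t, F s < M) → F t ≤ c) :
    ∀ t ∈ Icc a b, F t < M := by
  by_contra! hex
  set T := Icc a b ∩ F ⁻¹' Ici M
  have hT : IsClosed T := hF.preimage_isClosed_of_isClosed isClosed_Icc isClosed_Ici
  have hbdd : BddBelow T := ⟨a, fun x hx => hx.1.1⟩
  obtain ⟨hr₀, hMr₀⟩ : sInf T ∈ T := hT.csInf_mem hex hbdd
  set r₀ := sInf T
  have hbefore : ∀ s ∈ Icc a b, s < r₀ → F s < M := fun s hs hlt =>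
    lt_of_not_ge fun hge => (csInf_le hbdd ⟨hs, hge⟩).not_gt hlt
  have hlt : a < r₀ := hr₀.1.lt_of_ne fun h => (hMr₀.trans_lt (h ▸ ha)).false
  have hle : ∀ s ∈ Ico a r₀, F s ≤ c := fun s hs =>
    hboot s ⟨hs.1, hs.2.le.trans hr₀.2⟩ fun τ hτ =>
      hbefore τ ⟨hτ.1, hτ.2.trans (hs.2.le.trans hr₀.2)⟩ (hτ.2.trans_lt hs.2)
  have hcl : closure (Ico a r₀) = Icc a r₀ := closure_Ico hlt.ne
  have : F r₀ ≤ c := le_on_closure hle (hcl ▸ hF.mono (Icc_subset_Icc_right hr₀.2))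
    continuousOn_const (hcl ▸ right_mem_Icc.2 hlt.le)
  exact (hMr₀.trans this).not_gt hc

/-- `ρ'` stands for the derivative of the weight `ρ`, and `q r` for the source `λ ρ(r) f(r, u(r))`. -/
def SolvesHcapEq (ρ ρ' q : ℝ → ℝ) (a b : ℝ) (v : ℝ → ℝ) : Prop :=
  ∃ g : ℝ → ℝ, ContinuousOn g (Icc a b) ∧
    (∀ r ∈ Icc a b, HasDerivWithinAt (fun t => ρ t * v t) (g r) (Icc a b) r) ∧
    ∀ r ∈ Ioo a b, -g r = q r * hcap (v r) - ρ' r * v r ^ 3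

def SolvesPhi1Eq (ρ q : ℝ → ℝ) (a b : ℝ) (v : ℝ → ℝ) : Prop :=
  ∃ w : ℝ → ℝ, ContinuousOn w (Icc a b) ∧
    (∀ r ∈ Icc a b, HasDerivWithinAt (fun t => ρ t * phi1 (v t)) (w r) (Icc a b) r) ∧
    ∀ r ∈ Ioo a b, w r + q r = 0

lemma sub_div_hcap_eq_neg {g q ρ' s : ℝ} (hs : |s| < 1) (h : -g = q * hcap s - ρ' * s ^ 3) :
    (g - ρ' * s ^ 3) / hcap s = -q := by
  rw [div_eq_iff (hcap_pos hs).ne']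
  linarith

section Equation

variable {a b : ℝ} {ρ ρ' q v : ℝ → ℝ}

theorem solvesHcapEq_iff_solvesPhi1Eq
    (hρ : ∀ r ∈ Icc a b, HasDerivWithinAt ρ (ρ' r) (Icc a b) r) (hρ0 : ∀ r ∈ Icc a b, 0 < ρ r)
    (hρ' : ContinuousOn ρ' (Icc a b)) (hv : ContinuousOn v (Icc a b))
    (hv1 : ∀ r ∈ Icc a b, |v r| < 1) :
    SolvesHcapEq ρ ρ' q a b v ↔ SolvesPhi1Eq ρ q a b v := by
  have hρS : ∀ t ∈ Icc a b, ρ t ≠ 0 := fun t ht => (hρ0 t ht).ne'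
  have hcapc : ContinuousOn (fun r => hcap (v r)) (Icc a b) := continuous_hcap.comp_continuousOn hv
  constructor
  · rintro ⟨g, hgc, hg, hode⟩
    refine ⟨fun r => (g r - ρ' r * v r ^ 3) / hcap (v r),
      (hgc.sub (hρ'.mul (hv.pow 3))).div hcapc fun r hr => (hcap_pos (hv1 r hr)).ne',
      fun r hr => (hg r hr).weighted_phi1 (hρ r hr) hρS hr (hv1 r hr), fun r hr => ?_⟩
    dsimp only
    rw [sub_div_hcap_eq_neg (hv1 r (Ioo_subset_Icc_self hr)) (hode r hr), neg_add_cancel]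
  · rintro ⟨w, hwc, hw, hode⟩
    refine ⟨fun r => hcap (v r) * w r + ρ' r * v r ^ 3, (hcapc.mul hwc).add (hρ'.mul (hv.pow 3)),
      fun r hr => (hw r hr).weighted_of_phi1 (hρ r hr) hρS hr hv1, fun r hr => ?_⟩
    linear_combination -hcap (v r) * hode r hr

lemma SolvesHcapEq.abs_mul_phi1_le (h : SolvesHcapEq ρ ρ' q a b v)
    (hρ : ∀ r ∈ Icc a b, HasDerivWithinAt ρ (ρ' r) (Icc a b) r) (hρ0 : ∀ r ∈ Icc a b, 0 < ρ r)
    (hv : ContinuousOn v (Icc a b)) (hva : v a = 0) {K : ℝ} (hK : ∀ r ∈ Icc a b, |q r| ≤ K)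
    {t : ℝ} (ht : t ∈ Icc a b) (hvt : ∀ s ∈ Icc a t, |v s| < 1) :
    |ρ t * phi1 (v t)| ≤ K * (t - a) := by
  obtain ⟨g, -, hg, hode⟩ := h
  rcases ht.1.eq_or_lt with rfl | hat
  · simp [hva, phi1]
  have hsub : Icc a t ⊆ Icc a b := Icc_subset_Icc_right ht.2
  have hz : ContinuousOn (fun s => ρ s * phi1 (v s)) (Icc a t) := fun s hs =>
    ((hρ s (hsub hs)).continuousWithinAt.mono hsub).mul
      ((hasDerivAt_phi1 (hvt s hs)).continuousAt.comp_continuousWithinAt (hv.mono hsub s hs))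
  obtain ⟨c, hc, hslope⟩ := exists_hasDerivAt_eq_slope _ (fun s => -q s) hat hz fun s hs => by
    have hs' : s ∈ Ioo a b := ⟨hs.1, hs.2.trans_le ht.2⟩
    have := (hg s (Ioo_subset_Icc_self hs')).weighted_phi1 (hρ s (Ioo_subset_Icc_self hs'))
      (fun t ht => (hρ0 t ht).ne') (Ioo_subset_Icc_self hs') (hvt s (Ioo_subset_Icc_self hs))
    rw [sub_div_hcap_eq_neg (hvt s (Ioo_subset_Icc_self hs)) (hode s hs')] at this
    exact this.hasDerivAt (Icc_mem_nhds hs'.1 hs'.2)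
  rw [hva, show phi1 0 = 0 by simp [phi1], mul_zero, sub_zero,
    eq_div_iff (sub_pos.2 hat).ne'] at hslope
  rw [← hslope, abs_mul, abs_neg, abs_of_pos (sub_pos.2 hat)]
  exact mul_le_mul_of_nonneg_right (hK c (Icc_subset_Icc_right ht.2 (Ioo_subset_Icc_self hc)))
    (sub_pos.2 hat).le

theorem SolvesHcapEq.abs_lt_one (h : SolvesHcapEq ρ ρ' q a b v)
    (hρ : ∀ r ∈ Icc a b, HasDerivWithinAt ρ (ρ' r) (Icc a b) r) (hρ0 : ∀ r ∈ Icc a b, 0 < ρ r)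
    (hq : ContinuousOn q (Icc a b)) (hv : ContinuousOn v (Icc a b)) (hva : v a = 0) :
    ∀ r ∈ Icc a b, |v r| < 1 := by
  obtain ⟨K, hK⟩ := isCompact_Icc.exists_bound_of_continuousOn hq
  obtain ⟨m, hm, hρm⟩ := isCompact_Icc.exists_forall_le'
    (fun r hr => (hρ r hr).continuousWithinAt) hρ0
  refine hv.abs.forall_lt_of_bootstrap (by simp [hva])
    ((le_abs_self _).trans_lt (abs_phi1inv_lt_one (K * (b - a) / m))) fun t ht hvt => ?_
  refine abs_le_phi1inv_of_abs_phi1_le (hvt t ⟨ht.1, le_rfl⟩) ?_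
  rw [le_div_iff₀ hm]
  calc |phi1 (v t)| * m ≤ |phi1 (v t)| * ρ t := by gcongr; exact hρm t ht
    _ = |ρ t * phi1 (v t)| := by rw [abs_mul, abs_of_pos (hρ0 t ht), mul_comm]
    _ ≤ K * (t - a) := h.abs_mul_phi1_le hρ hρ0 hv hva hK ht hvt
    _ ≤ K * (b - a) := by
      gcongr
      · exact (abs_nonneg _).trans (hK t ht)
      · exact ht.2

end Equation

theorem stmt13_general (N : ℕ) (hN : 2 ≤ N) (δ R lam : ℝ) (hδ : 0 < δ)
    (f : ℝ → ℝ → ℝ)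
    (hfc : ContinuousOn (fun p : ℝ × ℝ => f p.1 p.2) (Icc δ R ×ˢ (univ : Set ℝ)))
    (u u' : ℝ → ℝ)
    (hu : ∀ r ∈ Icc δ R, HasDerivWithinAt u (u' r) (Icc δ R) r)
    (hu'c : ContinuousOn u' (Icc δ R)) :
    (((∃ g : ℝ → ℝ, ContinuousOn g (Icc δ R) ∧
        (∀ r ∈ Icc δ R,
          HasDerivWithinAt (fun t => t ^ (N - 1) * u' t) (g r) (Icc δ R) r) ∧
        ∀ r ∈ Ioo δ R, -g r =
          lam * r ^ (N - 1) * f r (u r) * hcap (u' r)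
            - (N - 1 : ℝ) * r ^ (N - 2) * (u' r) ^ 3) ∧
      u' δ = 0 ∧ u R = 0) ↔
    ((∀ r ∈ Icc δ R, |u' r| < 1) ∧
      (∃ w' : ℝ → ℝ, ContinuousOn w' (Icc δ R) ∧
        (∀ r ∈ Icc δ R,
          HasDerivWithinAt (fun t => t ^ (N - 1) * phi1 (u' t)) (w' r) (Icc δ R) r) ∧
        ∀ r ∈ Ioo δ R, w' r + lam * r ^ (N - 1) * f r (u r) = 0) ∧
      u' δ = 0 ∧ u R = 0)) ∧
    -- in particular, solutions of the first problem satisfy `sup |u'| < 1`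
    (((∃ g : ℝ → ℝ, ContinuousOn g (Icc δ R) ∧
        (∀ r ∈ Icc δ R,
          HasDerivWithinAt (fun t => t ^ (N - 1) * u' t) (g r) (Icc δ R) r) ∧
        ∀ r ∈ Ioo δ R, -g r =
          lam * r ^ (N - 1) * f r (u r) * hcap (u' r)
            - (N - 1 : ℝ) * r ^ (N - 2) * (u' r) ^ 3) ∧
      u' δ = 0 ∧ u R = 0) →
      ∃ c : ℝ, c < 1 ∧ ∀ r ∈ Icc δ R, |u' r| ≤ c) := by
  set ρ : ℝ → ℝ := fun t => t ^ (N - 1)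
  set ρ' : ℝ → ℝ := fun t => (N - 1 : ℝ) * t ^ (N - 2)
  set q : ℝ → ℝ := fun r => lam * r ^ (N - 1) * f r (u r)
  have hρ (r : ℝ) (_ : r ∈ Icc δ R) : HasDerivWithinAt ρ (ρ' r) (Icc δ R) r := by
    refine (hasDerivAt_pow (N - 1) r).hasDerivWithinAt.congr_deriv ?_
    rw [Nat.cast_sub (by omega), Nat.cast_one, show N - 1 - 1 = N - 2 by omega]
  have hρ0 (r : ℝ) (hr : r ∈ Icc δ R) : 0 < ρ r := pow_pos (hδ.trans_le hr.1) _
  have hρ' : ContinuousOn ρ' (Icc δ R) := by fun_prop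
  have hq : ContinuousOn q (Icc δ R) :=
    (continuousOn_const.mul (continuous_pow _).continuousOn).mul <| hfc.comp
      (continuousOn_id.prodMk fun r hr => (hu r hr).continuousWithinAt) fun r hr => ⟨hr, mem_univ _⟩
  have hlt (h : SolvesHcapEq ρ ρ' q δ R u') (h0 : u' δ = 0) : ∀ r ∈ Icc δ R, |u' r| < 1 :=
    h.abs_lt_one hρ hρ0 hq hu'c h0
  refine ⟨⟨fun ⟨h, h0, h1⟩ => ?_, fun ⟨hv1, h, h0, h1⟩ => ?_⟩, fun ⟨h, h0, _⟩ => ?_⟩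
  · exact ⟨hlt h h0, (solvesHcapEq_iff_solvesPhi1Eq hρ hρ0 hρ' hu'c (hlt h h0)).1 h, h0, h1⟩
  · exact ⟨(solvesHcapEq_iff_solvesPhi1Eq hρ hρ0 hρ' hu'c hv1).2 h, h0, h1⟩
  · obtain ⟨ε, hε, hle⟩ := isCompact_Icc.exists_forall_le' (f := fun r => 1 - |u' r|)
      (continuousOn_const.sub hu'c.abs) fun r hr => sub_pos.2 (hlt h h0 r hr)
    exact ⟨1 - ε, by linarith, fun r hr => by linarith [hle r hr]⟩

/-- equivalent formulation, Subsection 3.2. A `C¹` function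
`u` with `r ↦ r^{N-1} u'` continuously differentiable solves
`-(r^{N-1} u')' = λ r^{N-1} f(r,u) h(u') - (N-1) r^{N-2} (u')³` with
`u'(δ) = 0 = u(R)` if and only if it solves the Minkowski-curvature problem
`(r^{N-1} φ₁(u'))' + λ r^{N-1} f(r,u) = 0` (with `|u'| < 1`) with the same
boundary conditions; moreover every solution of the first problem satisfies
`sup |u'| < 1`. -/
theorem stmt13 (N : ℕ) (hN : 2 ≤ N) (δ R lam : ℝ) (hδ : 0 < δ) (hδR : δ < R) (hlam : 0 ≤ lam)
    (f : ℝ → ℝ → ℝ)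
    (hfc : ContinuousOn (fun p : ℝ × ℝ => f p.1 p.2) (Icc δ R ×ˢ (univ : Set ℝ)))
    (u u' : ℝ → ℝ)
    (hu : ∀ r ∈ Icc δ R, HasDerivWithinAt u (u' r) (Icc δ R) r)
    (hu'c : ContinuousOn u' (Icc δ R)) :
    (((∃ g : ℝ → ℝ, ContinuousOn g (Icc δ R) ∧
        (∀ r ∈ Icc δ R,
          HasDerivWithinAt (fun t => t ^ (N - 1) * u' t) (g r) (Icc δ R) r) ∧
        ∀ r ∈ Ioo δ R, -g r =
          lam * r ^ (N - 1) * f r (u r) * hcap (u' r)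
            - (N - 1 : ℝ) * r ^ (N - 2) * (u' r) ^ 3) ∧
      u' δ = 0 ∧ u R = 0) ↔
    ((∀ r ∈ Icc δ R, |u' r| < 1) ∧
      (∃ w' : ℝ → ℝ, ContinuousOn w' (Icc δ R) ∧
        (∀ r ∈ Icc δ R,
          HasDerivWithinAt (fun t => t ^ (N - 1) * phi1 (u' t)) (w' r) (Icc δ R) r) ∧
        ∀ r ∈ Ioo δ R, w' r + lam * r ^ (N - 1) * f r (u r) = 0) ∧
      u' δ = 0 ∧ u R = 0)) ∧
    -- in particular, solutions of the first problem satisfy `sup |u'| < 1`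
    (((∃ g : ℝ → ℝ, ContinuousOn g (Icc δ R) ∧
        (∀ r ∈ Icc δ R,
          HasDerivWithinAt (fun t => t ^ (N - 1) * u' t) (g r) (Icc δ R) r) ∧
        ∀ r ∈ Ioo δ R, -g r =
          lam * r ^ (N - 1) * f r (u r) * hcap (u' r)
            - (N - 1 : ℝ) * r ^ (N - 2) * (u' r) ^ 3) ∧
      u' δ = 0 ∧ u R = 0) →
      ∃ c : ℝ, c < 1 ∧ ∀ r ∈ Icc δ R, |u' r| ≤ c) :=
  stmt13_general N hN δ R lam hδ f hfc u u' hu hu'c
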